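/- arXiv:2301.01977 — 8 statements merged into one kernel-verified Lean document; each statement's English description precedes it below -/
import Mathlib

section
/- Let c ≥ 0, q ∈ ℝ, and let m ≥ n ≥ 1. Then the MSM distance between the constant time series q^(m) and q^(n) equals (m − n)·c, i.e., d(q^(m), q^(n)) = (m − n)·c. -/
/-- The MSM split/merge cost function `C(u, v, w)`: it is `c` if `u` lies
between `v` and `w`, and `c + min(|u-v|, |u-w|)` otherwise. -/
noncomputable def msmC (c u v w : ℝ) : ℝ :=
  if (v ≤ u ∧ u ≤ w) ∨ (w ≤ u ∧ u ≤ v) then c else c + min |u - v| |u - w|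

/-- The MSM dynamic-programming table `D[i,j]` (1-based indices) for the time
series given by the values of `x`, `y : ℕ → ℝ` at indices `1, 2, …`;
values at row/column `0` are junk.  The MSM distance between
`(x 1, …, x m)` and `(y 1, …, y n)` is `msmD c x y m n`. -/
noncomputable def msmD (c : ℝ) (x y : ℕ → ℝ) : ℕ → ℕ → ℝ
  | 0, _ => 0
  | _ + 1, 0 => 0
  | 1, 1 => |x 1 - y 1|
  | i + 2, 1 => msmD c x y (i + 1) 1 + msmC c (x (i + 2)) (x (i + 1)) (y 1)
  | 1, j + 2 => msmD c x y 1 (j + 1) + msmC c (y (j + 2)) (x 1) (y (j + 1))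
  | i + 2, j + 2 =>
      min (msmD c x y (i + 1) (j + 1) + |x (i + 2) - y (j + 2)|)
        (min (msmD c x y (i + 1) (j + 2) + msmC c (x (i + 2)) (x (i + 1)) (y (j + 2)))
          (msmD c x y (i + 2) (j + 1) + msmC c (y (j + 2)) (x (i + 2)) (y (j + 1))))
  termination_by i j => (i, j)

lemma msmC_const (c q : ℝ) : msmC c q q q = c := by
  simp [msmC]

lemma msm_key (c : ℝ) (hc : 0 ≤ c) (q : ℝ) :
    ∀ N i j : ℕ, i + j ≤ N →
      msmD c (fun _ => q) (fun _ => q) (i + 1) (j + 1) = |(i : ℝ) - (j : ℝ)| * c := by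
  intro N
  induction N with
  | zero =>
    intro i j h
    have hij : i = 0 ∧ j = 0 := by omega
    obtain ⟨rfl, rfl⟩ := hij
    simp [msmD]
  | succ N ih =>
    intro i j h
    match i, j with
    | 0, 0 => simp [msmD]
    | i + 1, 0 =>
      show msmD c (fun _ => q) (fun _ => q) (i + 2) 1 = _
      rw [msmD, msmC_const, ih i 0 (by omega)]
      push_cast
      simp only [sub_zero]
      rw [abs_of_nonneg (by positivity), abs_of_nonneg (by positivity)]
      ring
    | 0, j + 1 =>
      show msmD c (fun _ => q) (fun _ => q) 1 (j + 2) = _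
      rw [msmD, msmC_const, ih 0 j (by omega)]
      push_cast
      simp only [zero_sub, abs_neg]
      rw [abs_of_nonneg (by positivity), abs_of_nonneg (by positivity)]
      ring
    | i + 1, j + 1 =>
      show msmD c (fun _ => q) (fun _ => q) (i + 2) (j + 2) = _
      rw [msmD, msmC_const, ih i j (by omega), ih i (j + 1) (by omega),
        ih (i + 1) j (by omega)]
      push_cast
      rw [sub_self, abs_zero, add_zero,
        show (i : ℝ) + 1 - ((j : ℝ) + 1) = (i : ℝ) - j by ring]
      have h1 : |(i : ℝ) - j| * c ≤ |(i : ℝ) - ((j : ℝ) + 1)| * c + c := by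
        have hk : |(i : ℝ) - j| ≤ |(i : ℝ) - ((j : ℝ) + 1)| + 1 := by
          have := abs_sub_le (i : ℝ) ((j : ℝ) + 1) (j : ℝ)
          simpa using this
        nlinarith [abs_nonneg ((i : ℝ) - ((j : ℝ) + 1))]
      have h2 : |(i : ℝ) - j| * c ≤ |(i : ℝ) + 1 - j| * c + c := by
        have hk : |(i : ℝ) - j| ≤ |(i : ℝ) + 1 - j| + 1 := by
          have h3 := abs_sub_le ((i : ℝ)) ((i : ℝ) + 1) (j : ℝ)
          have h4 : |(i : ℝ) - ((i : ℝ) + 1)| = 1 := by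
            rw [show (i : ℝ) - ((i : ℝ) + 1) = -1 by ring]; simp
          linarith [h3, h4.le, h4.ge]
        nlinarith [abs_nonneg ((i : ℝ) + 1 - (j : ℝ))]
      rw [min_eq_left (le_min h1 h2)]

/-- The MSM distance between the constant time series `q^(m)` and `q^(n)`
equals `(m - n) · c`. -/
theorem msm_const_const (c : ℝ) (hc : 0 ≤ c) (q : ℝ) (m n : ℕ) (hn : 1 ≤ n) (hmn : n ≤ m) :
    msmD c (fun _ => q) (fun _ => q) m n = ((m : ℝ) - (n : ℝ)) * c := by
  obtain ⟨i, rfl⟩ : ∃ i, m = i + 1 := ⟨m - 1, by omega⟩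
  obtain ⟨j, rfl⟩ : ∃ j, n = j + 1 := ⟨n - 1, by omega⟩
  rw [msm_key c hc q (i + j) i j le_rfl]
  have : (j : ℝ) ≤ i := by exact_mod_cast by omega
  rw [abs_of_nonneg (by linarith)]
  push_cast
  ring
end

section
/- (Validity of the lower bound LB_ms.) Let c ≥ 0 and let x = (x_1,…,x_m) and y = (y_1,…,y_n) be time series. Then d(x,y) ≥ |m − n|·c, i.e., the MSM distance between two time series is at least the number of length-balancing split/merge operations times the split/merge cost c. -/
lemma msmC_ge (c u v w : ℝ) : c ≤ msmC c u v w := by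
  unfold msmC
  split
  · exact le_refl c
  · have h1 : (0:ℝ) ≤ |u - v| := abs_nonneg _
    have h2 : (0:ℝ) ≤ |u - w| := abs_nonneg _
    have : (0:ℝ) ≤ min |u - v| |u - w| := le_min h1 h2
    linarith

lemma abs_sub_one_le (a : ℝ) : |a| ≤ |a - 1| + 1 := by
  calc |a| = |(a - 1) + 1| := by ring_nf
    _ ≤ |a - 1| + |(1:ℝ)| := abs_add_le _ _
    _ = |a - 1| + 1 := by norm_num

theorem msm_aux (c : ℝ) (hc : 0 ≤ c) (x y : ℕ → ℝ) :
    (m n : ℕ) → 1 ≤ m → 1 ≤ n → |(m : ℝ) - (n : ℝ)| * c ≤ msmD c x y m n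
  | 1, 1, _, _ => by
    simp only [msmD]
    simp only [Nat.cast_one, sub_self, abs_zero, zero_mul]
    exact abs_nonneg _
  | (i+2), 1, _, _ => by
    have IH := msm_aux c hc x y (i+1) 1 (by omega) (by omega)
    have hC := msmC_ge c (x (i+2)) (x (i+1)) (y 1)
    rw [msmD]
    have h1 : |((i:ℝ)+2) - 1| = (i:ℝ) + 1 := by
      rw [abs_of_nonneg] <;> [ring; linarith [Nat.cast_nonneg (α := ℝ) i]]
    have h2 : |((i:ℝ)+1) - 1| = (i:ℝ) := by
      rw [abs_of_nonneg] <;> [ring; linarith [Nat.cast_nonneg (α := ℝ) i]]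
    push_cast at IH ⊢
    rw [h1]
    rw [h2] at IH
    nlinarith
  | 1, (j+2), _, _ => by
    have IH := msm_aux c hc x y 1 (j+1) (by omega) (by omega)
    have hC := msmC_ge c (y (j+2)) (x 1) (y (j+1))
    rw [msmD]
    have h1 : |1 - ((j:ℝ)+2)| = (j:ℝ) + 1 := by
      rw [abs_of_nonpos] <;> [ring; linarith [Nat.cast_nonneg (α := ℝ) j]]
    have h2 : |1 - ((j:ℝ)+1)| = (j:ℝ) := by
      rw [abs_of_nonpos] <;> [ring; linarith [Nat.cast_nonneg (α := ℝ) j]]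
    push_cast at IH ⊢
    rw [h1]
    rw [h2] at IH
    nlinarith
  | (i+2), (j+2), _, _ => by
    have IHd := msm_aux c hc x y (i+1) (j+1) (by omega) (by omega)
    have IHl := msm_aux c hc x y (i+1) (j+2) (by omega) (by omega)
    have IHr := msm_aux c hc x y (i+2) (j+1) (by omega) (by omega)
    have hC1 := msmC_ge c (x (i+2)) (x (i+1)) (y (j+2))
    have hC2 := msmC_ge c (y (j+2)) (x (i+2)) (y (j+1))
    rw [msmD]
    push_cast at IHd IHl IHr ⊢
    refine le_min ?_ (le_min ?_ ?_)
    · have h : |((i:ℝ)+2) - ((j:ℝ)+2)| = |((i:ℝ)+1) - ((j:ℝ)+1)| := by ring_nf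
      rw [h]
      have := abs_nonneg (x (i+2) - y (j+2))
      linarith
    · have h := abs_sub_one_le (((i:ℝ)+2) - ((j:ℝ)+2))
      have h2 : ((i:ℝ)+2) - ((j:ℝ)+2) - 1 = ((i:ℝ)+1) - ((j:ℝ)+2) := by ring
      rw [h2] at h
      nlinarith [mul_le_mul_of_nonneg_right h hc]
    · have h := abs_sub_one_le (((j:ℝ)+2) - ((i:ℝ)+2))
      rw [abs_sub_comm] at h
      have h2 : ((j:ℝ)+2) - ((i:ℝ)+2) - 1 = ((j:ℝ)+1) - ((i:ℝ)+2) := by ring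
      rw [h2, abs_sub_comm ((j:ℝ)+1)] at h
      nlinarith [mul_le_mul_of_nonneg_right h hc]
  termination_by m n => (m, n)

/-- Validity of the lower bound `LB_ms`: the MSM distance is at least
`|m - n| · c`. -/
theorem msm_LBms (c : ℝ) (hc : 0 ≤ c) (x y : ℕ → ℝ) (m n : ℕ) (hm : 1 ≤ m) (hn : 1 ≤ n) :
    |(m : ℝ) - (n : ℝ)| * c ≤ msmD c x y m n :=
  msm_aux c hc x y m n hm hn
end

section
/- (Validity of the lower bound LB_t.) Let c ≥ 0, let x = (x_1,…,x_m) and y = (y_1,…,y_n) be time series with m ≥ n, let q ∈ ℝ, and let q^(m), q^(n) be the constant time series of lengths m and n with all points equal to q. Then d(x,y) ≥ | d(x, q^(m)) − d(y, q^(n)) − (m − n)·c |. -/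
/-! ### Auxiliary definitions and lemmas -/

/-- Closed form of `msmC`: `c` plus the distance from `u` to the segment `[v,w]`,
which equals half the triangle excess. -/
lemma msmC_eq (c u v w : ℝ) : msmC c u v w = c + (|u - v| + |u - w| - |v - w|) / 2 := by
  unfold msmC
  split_ifs with h
  · rcases h with ⟨h1, h2⟩ | ⟨h1, h2⟩ <;>
    rcases abs_cases (u - v) with ⟨e1, _⟩ | ⟨e1, _⟩ <;>
    rcases abs_cases (u - w) with ⟨e2, _⟩ | ⟨e2, _⟩ <;>
    rcases abs_cases (v - w) with ⟨e3, _⟩ | ⟨e3, _⟩ <;> linarith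
  · rcases le_total v u with hvu | hvu <;> rcases le_total u w with huw | huw
    · exact absurd (Or.inl ⟨hvu, huw⟩) h
    · rcases min_cases |u - v| |u - w| with ⟨e0, _⟩ | ⟨e0, _⟩ <;>
      rcases abs_cases (u - v) with ⟨e1, _⟩ | ⟨e1, _⟩ <;>
      rcases abs_cases (u - w) with ⟨e2, _⟩ | ⟨e2, _⟩ <;>
      rcases abs_cases (v - w) with ⟨e3, _⟩ | ⟨e3, _⟩ <;> linarith
    · rcases min_cases |u - v| |u - w| with ⟨e0, _⟩ | ⟨e0, _⟩ <;>
      rcases abs_cases (u - v) with ⟨e1, _⟩ | ⟨e1, _⟩ <;>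
      rcases abs_cases (u - w) with ⟨e2, _⟩ | ⟨e2, _⟩ <;>
      rcases abs_cases (v - w) with ⟨e3, _⟩ | ⟨e3, _⟩ <;> linarith
    · exact absurd (Or.inr ⟨huw, hvu⟩) h

lemma msmC_nonneg (c u v w : ℝ) (hc : 0 ≤ c) : 0 ≤ msmC c u v w := by
  rw [msmC_eq]
  have h1 : |v - w| ≤ |v - u| + |u - w| := abs_sub_le v u w
  have h2 : |v - u| = |u - v| := abs_sub_comm v u
  linarith

lemma msmC_symm (c u v w : ℝ) : msmC c u v w = msmC c u w v := by
  rw [msmC_eq, msmC_eq, abs_sub_comm v w]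
  ring

lemma msmC_qq (c u q : ℝ) : msmC c q u q = c := by
  rw [msmC_eq, sub_self, abs_zero, abs_sub_comm q u]
  ring

/-- Half the triangle excess: the distance from `v` to the segment `[u,q]`. -/
noncomputable def msmPsi (q v u : ℝ) : ℝ := (|v - u| + |v - q| - |u - q|) / 2

lemma msmPsi_nonneg (q v u : ℝ) : 0 ≤ msmPsi q v u := by
  have h : |u - q| ≤ |u - v| + |v - q| := abs_sub_le u v q
  have e : |v - u| = |u - v| := abs_sub_comm v u
  unfold msmPsi; linarith

lemma msmPsi_qq (q u : ℝ) : msmPsi q q u = 0 := by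
  unfold msmPsi
  rw [sub_self, abs_zero, abs_sub_comm q u]
  ring

/-- Closed form of `d(x, q^(i))` (distance of a prefix of `x` to the constant
series): a sum of increments `min(|x_i - q|, c + C(x_i, x_{i-1}, q))`. -/
noncomputable def msmA (c q : ℝ) (x : ℕ → ℝ) : ℕ → ℝ
  | 0 => 0
  | 1 => |x 1 - q|
  | i + 2 => msmA c q x (i + 1) + min |x (i + 2) - q| (c + msmC c (x (i + 2)) (x (i + 1)) q)

lemma msmA_const (c q : ℝ) (hc : 0 ≤ c) : ∀ j, msmA c q (fun _ => q) j = 0 := by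
  intro j
  induction j using Nat.strong_induction_on with
  | _ j ih =>
    match j with
    | 0 => rfl
    | 1 => show |q - q| = 0; simp
    | j + 2 =>
      show msmA c q (fun _ => q) (j + 1) + min |q - q| (c + msmC c q q q) = 0
      rw [ih (j + 1) (by omega)]
      rw [min_eq_left (by simpa using add_nonneg hc (msmC_nonneg c q q q hc))]
      simp

/-! ### The four scalar step lemmas -/

lemma msmS0 (q u v : ℝ) : |u - q| - |v - q| + msmPsi q v u ≤ |u - v| := by
  have h : |u - q| ≤ |u - v| + |v - q| := abs_sub_le u v q
  have e : |v - u| = |u - v| := abs_sub_comm v u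
  unfold msmPsi; linarith

lemma msmS1 (c q u u' v v' : ℝ) :
    min |u - q| (c + msmC c u u' q) - min |v - q| (c + msmC c v v' q)
      + msmPsi q v u - msmPsi q v' u' ≤ |u - v| := by
  rcases min_cases |v - q| (c + msmC c v v' q) with ⟨hv, -⟩ | ⟨hv, -⟩
  · have hu := min_le_left |u - q| (c + msmC c u u' q)
    have hp := msmPsi_nonneg q v' u'
    have h : |u - q| ≤ |u - v| + |v - q| := abs_sub_le u v q
    have e : |v - u| = |u - v| := abs_sub_comm v u
    unfold msmPsi at *
    rw [hv]
    linarith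
  · have hu := min_le_right |u - q| (c + msmC c u u' q)
    have hCu := msmC_eq c u u' q
    have hCv := msmC_eq c v v' q
    have t1 : |u - u'| ≤ |u - v| + |v - u'| := abs_sub_le u v u'
    have t2 : |v - u'| ≤ |v - v'| + |v' - u'| := abs_sub_le v v' u'
    have e : |v - u| = |u - v| := abs_sub_comm v u
    unfold msmPsi
    rw [hv]
    linarith

lemma msmS2 (c q u u' v : ℝ) :
    min |u - q| (c + msmC c u u' q) - c + msmPsi q v u - msmPsi q v u'
      ≤ msmC c u u' v := by
  have hu := min_le_right |u - q| (c + msmC c u u' q)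
  have hCu := msmC_eq c u u' q
  have hCv := msmC_eq c u u' v
  have e1 : |v - u| = |u - v| := abs_sub_comm v u
  have e2 : |v - u'| = |u' - v| := abs_sub_comm v u'
  unfold msmPsi
  linarith

lemma msmS3 (c q u v v' : ℝ) (hc : 0 ≤ c) :
    c - min |v - q| (c + msmC c v v' q) + msmPsi q v u - msmPsi q v' u
      ≤ msmC c v u v' := by
  have key : (|v - q| - |v' - q| - |v - v'|) / 2
      ≤ min |v - q| (c + msmC c v v' q) := by
    refine le_min ?_ ?_
    · have := abs_nonneg (v' - q)
      have := abs_nonneg (v - v')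
      have := abs_nonneg (v - q)
      linarith
    · have hC := msmC_eq c v v' q
      have := abs_nonneg (v - v')
      linarith
  have hC1 := msmC_eq c v v' q
  have hC2 := msmC_eq c v u v'
  have e1 : |v' - u| = |u - v'| := abs_sub_comm v' u
  unfold msmPsi
  linarith

/-! ### The main lower-bound invariant -/

lemma msm_main (c q : ℝ) (hc : 0 ≤ c) (x y : ℕ → ℝ) :
    ∀ i j : ℕ, 1 ≤ i → 1 ≤ j →
      msmA c q x i - msmA c q y j - ((i : ℝ) - (j : ℝ)) * c + msmPsi q (y j) (x i)
        ≤ msmD c x y i j := by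
  suffices H : ∀ N, ∀ i j : ℕ, i + j ≤ N → 1 ≤ i → 1 ≤ j →
      msmA c q x i - msmA c q y j - ((i : ℝ) - (j : ℝ)) * c + msmPsi q (y j) (x i)
        ≤ msmD c x y i j by
    exact fun i j hi hj => H (i + j) i j le_rfl hi hj
  intro N
  induction N with
  | zero => intro i j h hi hj; omega
  | succ N ih =>
    intro i j hij hi hj
    match i, j with
    | 1, 1 =>
      have h0 := msmS0 q (x 1) (y 1)
      rw [show msmD c x y 1 1 = |x 1 - y 1| from by rw [msmD]]
      have hax : msmA c q x 1 = |x 1 - q| := rfl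
      have hay : msmA c q y 1 = |y 1 - q| := rfl
      push_cast
      linarith
    | a + 2, 1 =>
      have IH := ih (a + 1) 1 (by omega) (by omega) (by omega)
      have hS := msmS2 c q (x (a + 2)) (x (a + 1)) (y 1)
      rw [show msmD c x y (a + 2) 1
          = msmD c x y (a + 1) 1 + msmC c (x (a + 2)) (x (a + 1)) (y 1) from by rw [msmD]]
      have hA : msmA c q x (a + 2) = msmA c q x (a + 1)
          + min |x (a + 2) - q| (c + msmC c (x (a + 2)) (x (a + 1)) q) := rfl
      push_cast at IH ⊢
      linarith
    | 1, b + 2 =>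
      have IH := ih 1 (b + 1) (by omega) (by omega) (by omega)
      have hS := msmS3 c q (x 1) (y (b + 2)) (y (b + 1)) hc
      rw [show msmD c x y 1 (b + 2)
          = msmD c x y 1 (b + 1) + msmC c (y (b + 2)) (x 1) (y (b + 1)) from by rw [msmD]]
      have hB : msmA c q y (b + 2) = msmA c q y (b + 1)
          + min |y (b + 2) - q| (c + msmC c (y (b + 2)) (y (b + 1)) q) := rfl
      push_cast at IH ⊢
      linarith
    | a + 2, b + 2 =>
      have IH1 := ih (a + 1) (b + 1) (by omega) (by omega) (by omega)
      have IH2 := ih (a + 1) (b + 2) (by omega) (by omega) (by omega)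
      have IH3 := ih (a + 2) (b + 1) (by omega) (by omega) (by omega)
      rw [show msmD c x y (a + 2) (b + 2)
          = min (msmD c x y (a + 1) (b + 1) + |x (a + 2) - y (b + 2)|)
              (min (msmD c x y (a + 1) (b + 2) + msmC c (x (a + 2)) (x (a + 1)) (y (b + 2)))
                (msmD c x y (a + 2) (b + 1) + msmC c (y (b + 2)) (x (a + 2)) (y (b + 1))))
            from by rw [msmD]]
      have hA : msmA c q x (a + 2) = msmA c q x (a + 1)
          + min |x (a + 2) - q| (c + msmC c (x (a + 2)) (x (a + 1)) q) := rfl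
      have hB : msmA c q y (b + 2) = msmA c q y (b + 1)
          + min |y (b + 2) - q| (c + msmC c (y (b + 2)) (y (b + 1)) q) := rfl
      refine le_min ?_ (le_min ?_ ?_)
      · have hS := msmS1 c q (x (a + 2)) (x (a + 1)) (y (b + 2)) (y (b + 1))
        rw [hA, hB]
        push_cast at IH1 ⊢
        linarith
      · have hS := msmS2 c q (x (a + 2)) (x (a + 1)) (y (b + 2))
        rw [hA]
        push_cast at IH2 ⊢
        linarith
      · have hS := msmS3 c q (x (a + 2)) (y (b + 2)) (y (b + 1)) hc
        rw [hB]
        push_cast at IH3 ⊢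
        linarith

/-! ### Symmetry of `msmD` -/

lemma msmD_symm (c : ℝ) (x y : ℕ → ℝ) : ∀ i j : ℕ, msmD c x y i j = msmD c y x j i := by
  suffices H : ∀ N, ∀ i j : ℕ, i + j ≤ N → msmD c x y i j = msmD c y x j i by
    exact fun i j => H (i + j) i j le_rfl
  intro N
  induction N with
  | zero =>
    intro i j h
    obtain ⟨rfl, rfl⟩ : i = 0 ∧ j = 0 := by omega
    rw [show msmD c x y 0 0 = (0:ℝ) from by rw [msmD],
      show msmD c y x 0 0 = (0:ℝ) from by rw [msmD]]
  | succ N ih =>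
    intro i j hij
    match i, j with
    | 0, 0 =>
      rw [show msmD c x y 0 0 = (0:ℝ) from by rw [msmD],
        show msmD c y x 0 0 = (0:ℝ) from by rw [msmD]]
    | 0, b + 1 =>
      rw [show msmD c x y 0 (b + 1) = 0 from by rw [msmD],
        show msmD c y x (b + 1) 0 = 0 from by rw [msmD]]
    | a + 1, 0 =>
      rw [show msmD c x y (a + 1) 0 = 0 from by rw [msmD],
        show msmD c y x 0 (a + 1) = 0 from by rw [msmD]]
    | 1, 1 =>
      rw [show msmD c x y 1 1 = |x 1 - y 1| from by rw [msmD],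
        show msmD c y x 1 1 = |y 1 - x 1| from by rw [msmD], abs_sub_comm]
    | a + 2, 1 =>
      rw [show msmD c x y (a + 2) 1
          = msmD c x y (a + 1) 1 + msmC c (x (a + 2)) (x (a + 1)) (y 1) from by rw [msmD],
        show msmD c y x 1 (a + 2)
          = msmD c y x 1 (a + 1) + msmC c (x (a + 2)) (y 1) (x (a + 1)) from by rw [msmD],
        ih (a + 1) 1 (by omega), msmC_symm]
    | 1, b + 2 =>
      rw [show msmD c x y 1 (b + 2)
          = msmD c x y 1 (b + 1) + msmC c (y (b + 2)) (x 1) (y (b + 1)) from by rw [msmD],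
        show msmD c y x (b + 2) 1
          = msmD c y x (b + 1) 1 + msmC c (y (b + 2)) (y (b + 1)) (x 1) from by rw [msmD],
        ih 1 (b + 1) (by omega), msmC_symm]
    | a + 2, b + 2 =>
      rw [show msmD c x y (a + 2) (b + 2)
          = min (msmD c x y (a + 1) (b + 1) + |x (a + 2) - y (b + 2)|)
              (min (msmD c x y (a + 1) (b + 2) + msmC c (x (a + 2)) (x (a + 1)) (y (b + 2)))
                (msmD c x y (a + 2) (b + 1) + msmC c (y (b + 2)) (x (a + 2)) (y (b + 1))))
            from by rw [msmD],
        show msmD c y x (b + 2) (a + 2)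
          = min (msmD c y x (b + 1) (a + 1) + |y (b + 2) - x (a + 2)|)
              (min (msmD c y x (b + 1) (a + 2) + msmC c (y (b + 2)) (y (b + 1)) (x (a + 2)))
                (msmD c y x (b + 2) (a + 1) + msmC c (x (a + 2)) (y (b + 2)) (x (a + 1))))
            from by rw [msmD],
        ih (a + 1) (b + 1) (by omega), ih (a + 1) (b + 2) (by omega),
        ih (a + 2) (b + 1) (by omega), abs_sub_comm (x (a + 2)) (y (b + 2)),
        msmC_symm c (x (a + 2)) (x (a + 1)) (y (b + 2)),
        msmC_symm c (y (b + 2)) (x (a + 2)) (y (b + 1)),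
        min_comm (msmD c y x (b + 2) (a + 1) + msmC c (x (a + 2)) (y (b + 2)) (x (a + 1)))
          (msmD c y x (b + 1) (a + 2) + msmC c (y (b + 2)) (y (b + 1)) (x (a + 2)))]

/-! ### The diagonal of the constant table equals `msmA` -/

lemma msmD_diag_le (c q : ℝ) (x : ℕ → ℝ) :
    ∀ i : ℕ, 1 ≤ i → msmD c x (fun _ => q) i i ≤ msmA c q x i
      ∧ msmD c x (fun _ => q) (i + 1) i ≤ msmA c q x i + msmC c (x (i + 1)) (x i) q := by
  intro i hi
  induction i, hi using Nat.le_induction with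
  | base =>
    constructor
    · rw [show msmD c x (fun _ => q) 1 1 = |x 1 - q| from by rw [msmD]]
      exact le_refl _
    · rw [show msmD c x (fun _ => q) 2 1
        = |x 1 - q| + msmC c (x 2) (x 1) q from by rw [msmD, msmD]]
      exact le_refl _
  | succ i hi ihp =>
    obtain ⟨P, Q⟩ := ihp
    obtain ⟨k, rfl⟩ : ∃ k, i = k + 1 := ⟨i - 1, by omega⟩
    have hint : msmD c x (fun _ => q) (k + 2) (k + 2)
        = min (msmD c x (fun _ => q) (k + 1) (k + 1) + |x (k + 2) - q|)
            (min (msmD c x (fun _ => q) (k + 1) (k + 2) + msmC c (x (k + 2)) (x (k + 1)) q)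
              (msmD c x (fun _ => q) (k + 2) (k + 1) + msmC c q (x (k + 2)) q)) := by
      rw [msmD]
    have hA : msmA c q x (k + 2) = msmA c q x (k + 1)
        + min |x (k + 2) - q| (c + msmC c (x (k + 2)) (x (k + 1)) q) := rfl
    have hP : msmD c x (fun _ => q) (k + 2) (k + 2) ≤ msmA c q x (k + 2) := by
      rw [hint, hA]
      rcases le_total |x (k + 2) - q| (c + msmC c (x (k + 2)) (x (k + 1)) q) with hle | hle
      · rw [min_eq_left hle]
        calc min (msmD c x (fun _ => q) (k + 1) (k + 1) + |x (k + 2) - q|) _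
            ≤ msmD c x (fun _ => q) (k + 1) (k + 1) + |x (k + 2) - q| := min_le_left _ _
          _ ≤ msmA c q x (k + 1) + |x (k + 2) - q| := by linarith
      · rw [min_eq_right hle, msmC_qq]
        calc min (msmD c x (fun _ => q) (k + 1) (k + 1) + |x (k + 2) - q|)
              (min (msmD c x (fun _ => q) (k + 1) (k + 2) + msmC c (x (k + 2)) (x (k + 1)) q)
                (msmD c x (fun _ => q) (k + 2) (k + 1) + c))
            ≤ msmD c x (fun _ => q) (k + 2) (k + 1) + c :=
              le_trans (min_le_right _ _) (min_le_right _ _)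
          _ ≤ msmA c q x (k + 1) + (c + msmC c (x (k + 2)) (x (k + 1)) q) := by linarith
    refine ⟨hP, ?_⟩
    -- Q at k+2 : msmD (k+3) (k+2) ≤ msmA (k+2) + msmC (x (k+3)) (x (k+2)) q
    have hint2 : msmD c x (fun _ => q) (k + 3) (k + 2)
        = min (msmD c x (fun _ => q) (k + 2) (k + 1) + |x (k + 3) - q|)
            (min (msmD c x (fun _ => q) (k + 2) (k + 2) + msmC c (x (k + 3)) (x (k + 2)) q)
              (msmD c x (fun _ => q) (k + 3) (k + 1) + msmC c q (x (k + 3)) q)) := by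
      rw [show k + 3 = (k + 1) + 2 from rfl, msmD]
    rw [hint2]
    calc min (msmD c x (fun _ => q) (k + 2) (k + 1) + |x (k + 3) - q|)
          (min (msmD c x (fun _ => q) (k + 2) (k + 2) + msmC c (x (k + 3)) (x (k + 2)) q)
            (msmD c x (fun _ => q) (k + 3) (k + 1) + msmC c q (x (k + 3)) q))
        ≤ msmD c x (fun _ => q) (k + 2) (k + 2) + msmC c (x (k + 3)) (x (k + 2)) q :=
          le_trans (min_le_right _ _) (min_le_left _ _)
      _ ≤ msmA c q x (k + 2) + msmC c (x (k + 3)) (x (k + 2)) q := by linarith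

lemma msmD_diag (c q : ℝ) (hc : 0 ≤ c) (x : ℕ → ℝ) (i : ℕ) (hi : 1 ≤ i) :
    msmD c x (fun _ => q) i i = msmA c q x i := by
  refine le_antisymm ((msmD_diag_le c q x i hi).1) ?_
  have H := msm_main c q hc x (fun _ => q) i i hi hi
  rw [msmA_const c q hc i, msmPsi_qq] at H
  simpa using H

/-! ### Main theorem -/

/-- Validity of the lower bound `LB_t`:
`d(x,y) ≥ |d(x, q^(m)) − d(y, q^(n)) − (m − n)·c|` for `m ≥ n`. -/
theorem msm_LBt (c : ℝ) (hc : 0 ≤ c) (x y : ℕ → ℝ) (m n : ℕ)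
    (hn : 1 ≤ n) (hmn : n ≤ m) (q : ℝ) :
    |msmD c x (fun _ => q) m m - msmD c y (fun _ => q) n n - ((m : ℝ) - (n : ℝ)) * c| ≤
      msmD c x y m n := by
  have hm : 1 ≤ m := le_trans hn hmn
  rw [msmD_diag c q hc x m hm, msmD_diag c q hc y n hn, abs_le]
  constructor
  · have H := msm_main c q hc y x n m hn hm
    rw [msmD_symm c y x n m] at H
    have hp := msmPsi_nonneg q (x m) (y n)
    linarith
  · have H := msm_main c q hc x y m n hm hn
    have hp := msmPsi_nonneg q (y n) (x m)
    linarith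
end

section
/- (Greedy heuristic is an upper bound.) Let c ≥ 0 and let x = (x_1,…,x_m) and y = (y_1,…,y_n) be time series with m ≥ n. Define values g_0, g_1, …, g_{m−1} by: g_0 = |x_m − y_n|; for 0 < i < n, g_i = g_{i−1} + 2c + |x_{m−i} − x_{m−i+1}| + |y_{n−i} − y_{n−i+1}| if |x_{m−i} − y_{n−i}| ≥ 2c and |x_{m−i+1} − y_{n−i+1}| ≥ 2c, and g_i = g_{i−1} + |x_{m−i} − y_{n−i}| otherwise; for n ≤ i < m, g_i = g_{i−1} + c + |x_{m−i} − x_{m−i+1}| if |x_{m−i} − y_1| ≥ c and |x_{m−i+1} − y_1| ≥ c, and g_i = g_{i−1} + c + |x_{m−i} − y_1| otherwise. Let d_greedy(x,y) = g_{m−1}. Then d(x,y) ≤ d_greedy(x,y). -/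
/-!
The greedy heuristic walks the table backwards along the cells `(m - i, max (n - i) 1)`,
from `(m, n)` to `(1, 1)`. Whichever branch it takes, its increment `g i - g (i - 1)` bounds
the drop of `D[i, j] - |x i - y j|` along one step of that walk: a match costs the matched
distance, and a split or merge costs at most `c` plus the triangle-inequality defect of the
three values involved. The branch conditions therefore never matter, and summing the steps
gives `D[m, n] ≤ g (m - 1) + D[1, 1] - |x 1 - y 1| = g (m - 1)`.
-/

lemma msmC_le_add_abs_sub_right (c u v w : ℝ) : msmC c u v w ≤ c + |u - w| := by
  unfold msmC
  split_ifs
  · linarith [abs_nonneg (u - w)]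
  · linarith [min_le_right |u - v| |u - w|]

/-- Equality holds when `u` lies between `v` and `w`; otherwise the right-hand side is
`c + 2 * min |u - v| |u - w|`. -/
lemma msmC_le_add_abs_sub_add_abs_sub_sub_abs_sub (c u v w : ℝ) :
    msmC c u v w ≤ c + |u - v| + |u - w| - |v - w| := by
  unfold msmC
  grind

section Table

variable (c : ℝ) (x y : ℕ → ℝ)

lemma msmD_one_one : msmD c x y 1 1 = |x 1 - y 1| := by
  rw [msmD]

lemma msmD_le_match (a b : ℕ) :
    msmD c x y (a + 2) (b + 2) ≤ msmD c x y (a + 1) (b + 1) + |x (a + 2) - y (b + 2)| := by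
  rw [msmD]
  exact min_le_left _ _

lemma msmD_le_split_x (a b : ℕ) :
    msmD c x y (a + 2) (b + 1) ≤
      msmD c x y (a + 1) (b + 1) + msmC c (x (a + 2)) (x (a + 1)) (y (b + 1)) := by
  cases b with
  | zero => rw [msmD]
  | succ b => rw [msmD]; exact (min_le_right _ _).trans (min_le_left _ _)

lemma msmD_le_split_y (a b : ℕ) :
    msmD c x y (a + 1) (b + 2) ≤
      msmD c x y (a + 1) (b + 1) + msmC c (y (b + 2)) (x (a + 1)) (y (b + 1)) := by
  cases a with
  | zero => rw [msmD]
  | succ a => rw [msmD]; exact (min_le_right _ _).trans (min_le_right _ _)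

/-- Reach `(a + 2, b + 2)` from `(a + 1, b + 1)` through `(a + 2, b + 1)`. -/
lemma msmD_le_split_x_split_y (a b : ℕ) :
    msmD c x y (a + 2) (b + 2) ≤
      msmD c x y (a + 1) (b + 1) + 2 * c + |x (a + 1) - x (a + 2)| + |y (b + 1) - y (b + 2)|
        + |x (a + 2) - y (b + 2)| - |x (a + 1) - y (b + 1)| := by
  have hx := msmD_le_split_x c x y a b
  have hy := msmD_le_split_y c x y (a + 1) b
  have hCx := msmC_le_add_abs_sub_add_abs_sub_sub_abs_sub c (x (a + 2)) (x (a + 1)) (y (b + 1))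
  have hCy := msmC_le_add_abs_sub_add_abs_sub_sub_abs_sub c (y (b + 2)) (x (a + 2)) (y (b + 1))
  rw [abs_sub_comm (x (a + 2)) (x (a + 1))] at hCx
  rw [abs_sub_comm (y (b + 2)) (y (b + 1)), abs_sub_comm (y (b + 2)) (x (a + 2))] at hCy
  linarith

lemma greedy_diag_step (a b : ℕ) (g₀ g₁ : ℝ)
    (hg : g₁ = if 2 * c ≤ |x (a + 1) - y (b + 1)| ∧ 2 * c ≤ |x (a + 2) - y (b + 2)| then
        g₀ + 2 * c + |x (a + 1) - x (a + 2)| + |y (b + 1) - y (b + 2)|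
      else
        g₀ + |x (a + 1) - y (b + 1)|) :
    msmD c x y (a + 2) (b + 2) - |x (a + 2) - y (b + 2)| + g₀ ≤
      msmD c x y (a + 1) (b + 1) - |x (a + 1) - y (b + 1)| + g₁ := by
  split_ifs at hg
  · linarith [msmD_le_split_x_split_y c x y a b]
  · linarith [msmD_le_match c x y a b]

lemma greedy_column_step (a : ℕ) (g₀ g₁ : ℝ)
    (hg : g₁ = if c ≤ |x (a + 1) - y 1| ∧ c ≤ |x (a + 2) - y 1| then
        g₀ + c + |x (a + 1) - x (a + 2)|
      else
        g₀ + c + |x (a + 1) - y 1|) :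
    msmD c x y (a + 2) 1 - |x (a + 2) - y 1| + g₀ ≤
      msmD c x y (a + 1) 1 - |x (a + 1) - y 1| + g₁ := by
  have hsplit := msmD_le_split_x c x y a 0
  split_ifs at hg
  · have hC := msmC_le_add_abs_sub_add_abs_sub_sub_abs_sub c (x (a + 2)) (x (a + 1)) (y 1)
    rw [abs_sub_comm (x (a + 2)) (x (a + 1))] at hC
    linarith
  · linarith [msmC_le_add_abs_sub_right c (x (a + 2)) (x (a + 1)) (y 1)]

end Table

theorem msm_greedy_upper_bound_general (c : ℝ) (x y : ℕ → ℝ) (m n : ℕ)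
    (hn : 1 ≤ n) (hmn : n ≤ m) (g : ℕ → ℝ)
    (hbase : g 0 = |x m - y n|)
    (hrec₁ : ∀ i, 0 < i → i < n →
      g i = if 2 * c ≤ |x (m - i) - y (n - i)| ∧ 2 * c ≤ |x (m - i + 1) - y (n - i + 1)| then
          g (i - 1) + 2 * c + |x (m - i) - x (m - i + 1)| + |y (n - i) - y (n - i + 1)|
        else
          g (i - 1) + |x (m - i) - y (n - i)|)
    (hrec₂ : ∀ i, n ≤ i → i < m →
      g i = if c ≤ |x (m - i) - y 1| ∧ c ≤ |x (m - i + 1) - y 1| then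
          g (i - 1) + c + |x (m - i) - x (m - i + 1)|
        else
          g (i - 1) + c + |x (m - i) - y 1|) :
    msmD c x y m n ≤ g (m - 1) := by
  have walk : ∀ i < m, msmD c x y m n ≤
      msmD c x y (m - i) (max (n - i) 1) - |x (m - i) - y (max (n - i) 1)| + g i := by
    intro i
    induction i with
    | zero =>
      intro _
      rw [Nat.sub_zero, Nat.sub_zero, max_eq_left hn, hbase]
      linarith
    | succ i ih =>
      intro hi
      refine (ih (by omega)).trans ?_
      obtain ⟨a, rfl⟩ : ∃ a, m = a + i + 2 := ⟨m - i - 2, by omega⟩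
      have hm : a + i + 2 - (i + 1) = a + 1 := by omega
      by_cases hi₁ : i + 1 < n
      · obtain ⟨b, rfl⟩ : ∃ b, n = b + i + 2 := ⟨n - i - 2, by omega⟩
        have hg := hrec₁ (i + 1) i.succ_pos hi₁
        rw [hm, show b + i + 2 - (i + 1) = b + 1 by omega, Nat.add_sub_cancel] at hg
        rw [hm, show max (b + i + 2 - (i + 1)) 1 = b + 1 by omega,
          show max (b + i + 2 - i) 1 = b + 2 by omega, show a + i + 2 - i = a + 2 by omega]
        exact greedy_diag_step c x y a b _ _ hg
      · have hg := hrec₂ (i + 1) (by omega) hi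
        rw [hm, Nat.add_sub_cancel] at hg
        rw [hm, show max (n - (i + 1)) 1 = 1 by omega, show max (n - i) 1 = 1 by omega,
          show a + i + 2 - i = a + 2 by omega]
        exact greedy_column_step c x y a _ _ hg
  have hend := walk (m - 1) (by omega)
  rw [show m - (m - 1) = 1 by omega, show max (n - (m - 1)) 1 = 1 by omega, msmD_one_one] at hend
  linarith

/-- The greedy heuristic is an upper bound on the MSM distance. -/
theorem msm_greedy_upper_bound (c : ℝ) (hc : 0 ≤ c) (x y : ℕ → ℝ) (m n : ℕ)
    (hn : 1 ≤ n) (hmn : n ≤ m) (g : ℕ → ℝ)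
    (hbase : g 0 = |x m - y n|)
    (hrec₁ : ∀ i, 0 < i → i < n →
      g i = if 2 * c ≤ |x (m - i) - y (n - i)| ∧ 2 * c ≤ |x (m - i + 1) - y (n - i + 1)| then
          g (i - 1) + 2 * c + |x (m - i) - x (m - i + 1)| + |y (n - i) - y (n - i + 1)|
        else
          g (i - 1) + |x (m - i) - y (n - i)|)
    (hrec₂ : ∀ i, n ≤ i → i < m →
      g i = if c ≤ |x (m - i) - y 1| ∧ c ≤ |x (m - i + 1) - y 1| then
          g (i - 1) + c + |x (m - i) - x (m - i + 1)|
        else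
          g (i - 1) + c + |x (m - i) - y 1|) :
    msmD c x y m n ≤ g (m - 1) :=
  msm_greedy_upper_bound_general c x y m n hn hmn g hbase hrec₁ hrec₂
end

section
/- (Soundness of the start-pruning parameter sc.) Let c ≥ 0, let x = (x_1,…,x_m) and y = (y_1,…,y_n) be time series, and let UB be a real number. If for some 1 ≤ i < m and 1 ≤ j ≤ n we have D[i,j'] > UB for all 1 ≤ j' ≤ j, then D[i+1,j'] > UB for all 1 ≤ j' ≤ j; that is, once all entries of row i up to column j exceed the upper bound, the same holds in row i+1, so these entries need not be computed. -/
/-- Soundness of the start-pruning parameter `sc`: if all entries of row `i`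
up to column `j` exceed the upper bound `UB`, then the same holds in
row `i + 1`. -/
theorem msm_sc_pruning_sound (c : ℝ) (hc : 0 ≤ c) (x y : ℕ → ℝ) (m n : ℕ)
    (UB : ℝ) (i j : ℕ) (hi : 1 ≤ i) (him : i < m) (hj : 1 ≤ j) (hjn : j ≤ n)
    (hrow : ∀ j', 1 ≤ j' → j' ≤ j → UB < msmD c x y i j') :
    ∀ j', 1 ≤ j' → j' ≤ j → UB < msmD c x y (i + 1) j' := by
  obtain ⟨k, rfl⟩ : ∃ k, i = k + 1 := ⟨i - 1, by omega⟩
  intro j' hj'1 hj'j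
  induction j' with
  | zero => omega
  | succ p ih =>
    match p with
    | 0 =>
      have h1 : UB < msmD c x y (k + 1) 1 := hrow 1 le_rfl hj
      have h2 : 0 ≤ msmC c (x (k + 2)) (x (k + 1)) (y 1) := msmC_nonneg _ _ _ _ hc
      show UB < msmD c x y (k + 2) 1
      rw [msmD]
      linarith
    | q + 1 =>
      have h1 : UB < msmD c x y (k + 1) (q + 1) := hrow _ (by omega) (by omega)
      have h2 : UB < msmD c x y (k + 1) (q + 2) := hrow _ (by omega) hj'j
      have h3 : UB < msmD c x y (k + 2) (q + 1) := ih (by omega) (by omega)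
      have c1 : 0 ≤ msmC c (x (k + 2)) (x (k + 1)) (y (q + 2)) := msmC_nonneg _ _ _ _ hc
      have c2 : 0 ≤ msmC c (y (q + 2)) (x (k + 2)) (y (q + 1)) := msmC_nonneg _ _ _ _ hc
      have a1 : 0 ≤ |x (k + 2) - y (q + 2)| := abs_nonneg _
      show UB < msmD c x y (k + 2) (q + 2)
      rw [msmD]
      refine lt_min (by linarith) (lt_min (by linarith) (by linarith))
end

section
/- (Soundness of the end-pruning parameter ec.) Let c ≥ 0, let x = (x_1,…,x_m) and y = (y_1,…,y_n) be time series, and let UB be a real number. If for some 2 ≤ i ≤ m and 1 ≤ j ≤ n we have D[i,j] > UB and D[i−1,j'] > UB for all j ≤ j' ≤ n, then D[i,j'] > UB for all j ≤ j' ≤ n; that is, once an entry of row i exceeds the upper bound and all entries of row i−1 from that column onward exceed the upper bound, the remainder of row i also exceeds the upper bound and need not be computed. -/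
/-- Soundness of the end-pruning parameter `ec`: if an entry `D[i,j]` exceeds
the upper bound `UB` and all entries of row `i − 1` from column `j` onward
exceed `UB`, then all entries of row `i` from column `j` onward exceed `UB`. -/
theorem msm_ec_pruning_sound (c : ℝ) (hc : 0 ≤ c) (x y : ℕ → ℝ) (m n : ℕ)
    (UB : ℝ) (i j : ℕ) (hi : 2 ≤ i) (him : i ≤ m) (hj : 1 ≤ j) (hjn : j ≤ n)
    (hentry : UB < msmD c x y i j)
    (hrow : ∀ j', j ≤ j' → j' ≤ n → UB < msmD c x y (i - 1) j') :
    ∀ j', j ≤ j' → j' ≤ n → UB < msmD c x y i j' := by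
  obtain ⟨a, rfl⟩ : ∃ a, i = a + 2 := ⟨i - 2, by omega⟩
  have hrow' : ∀ j', j ≤ j' → j' ≤ n → UB < msmD c x y (a + 1) j' := hrow
  intro j' hjj'
  induction j', hjj' using Nat.le_induction with
  | base => intro _; exact hentry
  | succ k hk ih =>
    intro hkn
    obtain ⟨b, rfl⟩ : ∃ b, k = b + 1 := ⟨k - 1, by omega⟩
    rw [show (b + 1 + 1 : ℕ) = b + 2 from rfl, msmD]
    refine lt_min ?_ (lt_min ?_ ?_)
    · have h1 := hrow' (b + 1) hk (by omega)
      have : (0:ℝ) ≤ |x (a + 2) - y (b + 2)| := abs_nonneg _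
      linarith
    · have h1 := hrow' (b + 2) (by omega) hkn
      have h2 := msmC_nonneg c (x (a + 2)) (x (a + 1)) (y (b + 2)) hc
      linarith
    · have h1 := ih (by omega)
      have h2 := msmC_nonneg c (y (b + 2)) (x (a + 2)) (y (b + 1)) hc
      linarith
end

section
/- (Concatenation subadditivity, underlying the upper-bound update strategy.) Let c ≥ 0 and let x, x', y, y' be time series, with x⋅x' and y⋅y' denoting concatenations. Then d(x⋅x', y⋅y') ≤ d(x,y) + d(x',y'). In particular, for 1 ≤ i ≤ m and 1 ≤ j ≤ n (with i < m and j < n), d(x,y) ≤ D[i,j] + d((x_{i+1},…,x_m), (y_{j+1},…,y_n)), so the exact distance is bounded by a diagonal entry plus any upper bound on the distance of the remaining suffixes. -/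
section Recurrence

variable (c : ℝ) (x y : ℕ → ℝ)

lemma msmD_add_two_one (i : ℕ) :
    msmD c x y (i + 2) 1 = msmD c x y (i + 1) 1 + msmC c (x (i + 2)) (x (i + 1)) (y 1) := by
  rw [msmD]

lemma msmD_one_add_two (j : ℕ) :
    msmD c x y 1 (j + 2) = msmD c x y 1 (j + 1) + msmC c (y (j + 2)) (x 1) (y (j + 1)) := by
  rw [msmD]

lemma msmD_add_two_add_two (i j : ℕ) :
    msmD c x y (i + 2) (j + 2) =
      min (msmD c x y (i + 1) (j + 1) + |x (i + 2) - y (j + 2)|)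
        (min (msmD c x y (i + 1) (j + 2) + msmC c (x (i + 2)) (x (i + 1)) (y (j + 2)))
          (msmD c x y (i + 2) (j + 1) + msmC c (y (j + 2)) (x (i + 2)) (y (j + 1)))) := by
  rw [msmD]

variable {c x y} {i j : ℕ}

lemma msmD_succ_succ_le_match (hi : 1 ≤ i) (hj : 1 ≤ j) :
    msmD c x y (i + 1) (j + 1) ≤ msmD c x y i j + |x (i + 1) - y (j + 1)| := by
  obtain ⟨i, rfl⟩ := Nat.exists_eq_add_of_le' hi
  obtain ⟨j, rfl⟩ := Nat.exists_eq_add_of_le' hj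
  rw [msmD_add_two_add_two]
  exact min_le_left _ _

lemma msmD_succ_succ_le_split_x (hi : 1 ≤ i) (hj : 1 ≤ j) :
    msmD c x y (i + 1) (j + 1) ≤
      msmD c x y i (j + 1) + msmC c (x (i + 1)) (x i) (y (j + 1)) := by
  obtain ⟨i, rfl⟩ := Nat.exists_eq_add_of_le' hi
  obtain ⟨j, rfl⟩ := Nat.exists_eq_add_of_le' hj
  rw [msmD_add_two_add_two]
  exact (min_le_right _ _).trans (min_le_left _ _)

lemma msmD_succ_succ_le_split_y (hi : 1 ≤ i) (hj : 1 ≤ j) :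
    msmD c x y (i + 1) (j + 1) ≤
      msmD c x y (i + 1) j + msmC c (y (j + 1)) (x (i + 1)) (y j) := by
  obtain ⟨i, rfl⟩ := Nat.exists_eq_add_of_le' hi
  obtain ⟨j, rfl⟩ := Nat.exists_eq_add_of_le' hj
  rw [msmD_add_two_add_two]
  exact (min_le_right _ _).trans (min_le_right _ _)

end Recurrence

lemma msmD_congr (c : ℝ) {x₁ y₁ x₂ y₂ : ℕ → ℝ} (i j : ℕ)
    (hx : ∀ k, 1 ≤ k → k ≤ i → x₁ k = x₂ k) (hy : ∀ k, 1 ≤ k → k ≤ j → y₁ k = y₂ k) :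
    msmD c x₁ y₁ i j = msmD c x₂ y₂ i j := by
  match i, j with
  | 0, j => rw [msmD, msmD]
  | i + 1, 0 => rw [msmD, msmD]
  | 1, 1 => rw [msmD_one_one, msmD_one_one, hx 1 le_rfl le_rfl, hy 1 le_rfl le_rfl]
  | i + 2, 1 =>
    rw [msmD_add_two_one, msmD_add_two_one,
      msmD_congr c (i + 1) 1 (fun k h₁ h₂ => hx k h₁ (by omega)) hy,
      hx (i + 2) (by omega) le_rfl, hx (i + 1) (by omega) (by omega), hy 1 le_rfl le_rfl]
  | 1, j + 2 =>
    rw [msmD_one_add_two, msmD_one_add_two,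
      msmD_congr c 1 (j + 1) hx (fun k h₁ h₂ => hy k h₁ (by omega)),
      hy (j + 2) (by omega) le_rfl, hy (j + 1) (by omega) (by omega), hx 1 le_rfl le_rfl]
  | i + 2, j + 2 =>
    rw [msmD_add_two_add_two, msmD_add_two_add_two,
      msmD_congr c (i + 1) (j + 1) (fun k h₁ h₂ => hx k h₁ (by omega))
        (fun k h₁ h₂ => hy k h₁ (by omega)),
      msmD_congr c (i + 1) (j + 2) (fun k h₁ h₂ => hx k h₁ (by omega)) hy,
      msmD_congr c (i + 2) (j + 1) hx (fun k h₁ h₂ => hy k h₁ (by omega)),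
      hx (i + 2) (by omega) le_rfl, hx (i + 1) (by omega) (by omega),
      hy (j + 2) (by omega) le_rfl, hy (j + 1) (by omega) (by omega)]
  termination_by (i, j)

section Concat

variable {c : ℝ} {X Y x' y' : ℕ → ℝ} {m n : ℕ} {B : ℝ}
  (hX : ∀ k, 1 ≤ k → X (m + k) = x' k) (hY : ∀ k, 1 ≤ k → Y (n + k) = y' k)
include hX hY

lemma msmD_shift_le_of_match (hm : 1 ≤ m) (hn : 1 ≤ n) {i j : ℕ}
    (h : msmD c X Y (m + i) (n + j) ≤ B + msmD c x' y' i j) :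
    msmD c X Y (m + (i + 1)) (n + (j + 1)) ≤
      B + (msmD c x' y' i j + |x' (i + 1) - y' (j + 1)|) := by
  calc msmD c X Y (m + (i + 1)) (n + (j + 1))
      ≤ msmD c X Y (m + i) (n + j) + |X (m + (i + 1)) - Y (n + (j + 1))| :=
        msmD_succ_succ_le_match (i := m + i) (j := n + j) (by omega) (by omega)
    _ ≤ B + msmD c x' y' i j + |x' (i + 1) - y' (j + 1)| := by
        rw [hX _ (by omega), hY _ (by omega)]
        gcongr
    _ = _ := add_assoc _ _ _

lemma msmD_shift_le_of_split_x (hn : 1 ≤ n) {i j : ℕ} (hi : 1 ≤ i)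
    (h : msmD c X Y (m + i) (n + (j + 1)) ≤ B + msmD c x' y' i (j + 1)) :
    msmD c X Y (m + (i + 1)) (n + (j + 1)) ≤
      B + (msmD c x' y' i (j + 1) + msmC c (x' (i + 1)) (x' i) (y' (j + 1))) := by
  calc msmD c X Y (m + (i + 1)) (n + (j + 1))
      ≤ msmD c X Y (m + i) (n + (j + 1)) +
          msmC c (X (m + (i + 1))) (X (m + i)) (Y (n + (j + 1))) :=
        msmD_succ_succ_le_split_x (i := m + i) (j := n + j) (by omega) (by omega)
    _ ≤ B + msmD c x' y' i (j + 1) + msmC c (x' (i + 1)) (x' i) (y' (j + 1)) := by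
        rw [hX _ (by omega), hX _ hi, hY _ (by omega)]
        gcongr
    _ = _ := add_assoc _ _ _

lemma msmD_shift_le_of_split_y (hm : 1 ≤ m) {i j : ℕ} (hj : 1 ≤ j)
    (h : msmD c X Y (m + (i + 1)) (n + j) ≤ B + msmD c x' y' (i + 1) j) :
    msmD c X Y (m + (i + 1)) (n + (j + 1)) ≤
      B + (msmD c x' y' (i + 1) j + msmC c (y' (j + 1)) (x' (i + 1)) (y' j)) := by
  calc msmD c X Y (m + (i + 1)) (n + (j + 1))
      ≤ msmD c X Y (m + (i + 1)) (n + j) +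
          msmC c (Y (n + (j + 1))) (X (m + (i + 1))) (Y (n + j)) :=
        msmD_succ_succ_le_split_y (i := m + i) (j := n + j) (by omega) (by omega)
    _ ≤ B + msmD c x' y' (i + 1) j + msmC c (y' (j + 1)) (x' (i + 1)) (y' j) := by
        rw [hX _ (by omega), hY _ (by omega), hY _ hj]
        gcongr
    _ = _ := add_assoc _ _ _

lemma msmD_add_add_le (hm : 1 ≤ m) (hn : 1 ≤ n) :
    ∀ i j, 1 ≤ i → 1 ≤ j →
      msmD c X Y (m + i) (n + j) ≤ msmD c X Y m n + msmD c x' y' i j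
  | 1, 1, _, _ => by
    rw [msmD_one_one, ← hX 1 le_rfl, ← hY 1 le_rfl]
    exact msmD_succ_succ_le_match hm hn
  | i + 2, 1, _, _ => by
    rw [msmD_add_two_one]
    exact msmD_shift_le_of_split_x hX hY hn (j := 0) (by omega)
      (msmD_add_add_le hm hn (i + 1) 1 (by omega) le_rfl)
  | 1, j + 2, _, _ => by
    rw [msmD_one_add_two]
    exact msmD_shift_le_of_split_y hX hY hm (i := 0) (by omega)
      (msmD_add_add_le hm hn 1 (j + 1) le_rfl (by omega))
  | i + 2, j + 2, _, _ => by
    rw [msmD_add_two_add_two, ← min_add_add_left, ← min_add_add_left]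
    exact le_min
      (msmD_shift_le_of_match hX hY hm hn (msmD_add_add_le hm hn _ _ (by omega) (by omega)))
      (le_min
        (msmD_shift_le_of_split_x hX hY hn (by omega)
          (msmD_add_add_le hm hn _ _ (by omega) (by omega)))
        (msmD_shift_le_of_split_y hX hY hm (by omega)
          (msmD_add_add_le hm hn _ _ (by omega) (by omega))))

end Concat

theorem msm_concat_subadditive_general (c : ℝ) (x x' y y' : ℕ → ℝ)
    (m m' n n' : ℕ) (hm : 1 ≤ m) (hm' : 1 ≤ m') (hn : 1 ≤ n) (hn' : 1 ≤ n') :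
    msmD c (fun k => if k ≤ m then x k else x' (k - m))
        (fun k => if k ≤ n then y k else y' (k - n)) (m + m') (n + n') ≤
      msmD c x y m n + msmD c x' y' m' n' ∧
    ∀ i j, 1 ≤ i → i < m → 1 ≤ j → j < n →
      msmD c x y m n ≤
        msmD c x y i j +
          msmD c (fun k => x (k + i)) (fun k => y (k + j)) (m - i) (n - j) := by
  constructor
  · rw [← msmD_congr c m n (fun k _ hk => if_pos hk) (fun k _ hk => if_pos hk)]
    refine msmD_add_add_le ?_ ?_ hm hn m' n' hm' hn'
    · intro k hk
      simp [show ¬m + k ≤ m by omega]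
    · intro k hk
      simp [show ¬n + k ≤ n by omega]
  · intro i j hi him hj hjn
    have h := msmD_add_add_le (c := c) (X := x) (Y := y) (x' := fun k => x (k + i))
      (y' := fun k => y (k + j)) (fun k _ => by rw [add_comm]) (fun k _ => by rw [add_comm])
      hi hj (m - i) (n - j) (by omega) (by omega)
    rwa [Nat.add_sub_cancel' him.le, Nat.add_sub_cancel' hjn.le] at h

/-- Concatenation subadditivity of the MSM distance:
`d(x⋅x', y⋅y') ≤ d(x,y) + d(x',y')`; in particular, the exact distance is
bounded by a table entry `D[i,j]` plus the distance of the remaining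
suffixes. -/
theorem msm_concat_subadditive (c : ℝ) (hc : 0 ≤ c) (x x' y y' : ℕ → ℝ)
    (m m' n n' : ℕ) (hm : 1 ≤ m) (hm' : 1 ≤ m') (hn : 1 ≤ n) (hn' : 1 ≤ n') :
    msmD c (fun k => if k ≤ m then x k else x' (k - m))
        (fun k => if k ≤ n then y k else y' (k - n)) (m + m') (n + n') ≤
      msmD c x y m n + msmD c x' y' m' n' ∧
    ∀ i j, 1 ≤ i → i < m → 1 ≤ j → j < n →
      msmD c x y m n ≤
        msmD c x y i j +
          msmD c (fun k => x (k + i)) (fun k => y (k + j)) (m - i) (n - j) :=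
  msm_concat_subadditive_general c x x' y y' m m' n n' hm hm' hn hn'
end

section
/- (Nonnegativity and identity of indiscernibles of the MSM distance.) Let x = (x_1,…,x_m) and y = (y_1,…,y_n) be time series. For all c ≥ 0, d(x,y) ≥ 0 and d(x,x) = 0. Moreover, if c > 0, then d(x,y) = 0 if and only if m = n and x_i = y_i for all 1 ≤ i ≤ m. -/
lemma msmD_nonneg (c : ℝ) (hc : 0 ≤ c) (x y : ℕ → ℝ) :
    ∀ i j, 0 ≤ msmD c x y i j
  | 0, _ => by rw [msmD]
  | _ + 1, 0 => by rw [msmD]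
  | 1, 1 => by rw [msmD]; exact abs_nonneg _
  | i + 2, 1 => by
      rw [msmD]
      have h1 := msmD_nonneg c hc x y (i + 1) 1
      have h2 := msmC_ge c (x (i + 2)) (x (i + 1)) (y 1)
      linarith
  | 1, j + 2 => by
      rw [msmD]
      have h1 := msmD_nonneg c hc x y 1 (j + 1)
      have h2 := msmC_ge c (y (j + 2)) (x 1) (y (j + 1))
      linarith
  | i + 2, j + 2 => by
      rw [msmD]
      have h1 := msmD_nonneg c hc x y (i + 1) (j + 1)
      have h2 := msmD_nonneg c hc x y (i + 1) (j + 2)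
      have h3 := msmD_nonneg c hc x y (i + 2) (j + 1)
      have c1 := msmC_ge c (x (i + 2)) (x (i + 1)) (y (j + 2))
      have c2 := msmC_ge c (y (j + 2)) (x (i + 2)) (y (j + 1))
      have a := abs_nonneg (x (i + 2) - y (j + 2))
      exact le_min (by linarith) (le_min (by linarith) (by linarith))
  termination_by i j => (i, j)

lemma msmD_diag_eq_zero (c : ℝ) (hc : 0 ≤ c) (x y : ℕ → ℝ) :
    ∀ i, 1 ≤ i → (∀ k, 1 ≤ k → k ≤ i → x k = y k) → msmD c x y i i = 0 := by
  intro i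
  induction i using Nat.strong_induction_on with
  | _ i ih =>
    intro hi hxy
    match i, hi with
    | 1, _ =>
      rw [msmD, hxy 1 le_rfl le_rfl, sub_self, abs_zero]
    | (i + 2), _ =>
      have h0 : msmD c x y (i + 1) (i + 1) = 0 := by
        apply ih (i + 1) (by omega) (by omega)
        intro k hk1 hk2; exact hxy k hk1 (by omega)
      have hx : x (i + 2) = y (i + 2) := hxy (i + 2) (by omega) le_rfl
      apply le_antisymm
      · rw [msmD]
        calc min (msmD c x y (i + 1) (i + 1) + |x (i + 2) - y (i + 2)|) _
            ≤ msmD c x y (i + 1) (i + 1) + |x (i + 2) - y (i + 2)| := min_le_left _ _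
          _ = 0 := by rw [h0, hx, sub_self, abs_zero, add_zero]
      · exact msmD_nonneg c hc x y _ _

lemma msmD_eq_zero_forced (c : ℝ) (hc : 0 < c) (x y : ℕ → ℝ) :
    ∀ i j, 1 ≤ i → 1 ≤ j → msmD c x y i j = 0 →
      i = j ∧ ∀ k, 1 ≤ k → k ≤ i → x k = y k := by
  have hc' : (0:ℝ) ≤ c := le_of_lt hc
  intro i
  induction i using Nat.strong_induction_on with
  | _ i ih =>
    intro j hi hj h
    match i, j, hi, hj with
    | 1, 1, _, _ =>
      rw [msmD] at h
      refine ⟨rfl, fun k hk1 hk2 => ?_⟩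
      interval_cases k
      exact sub_eq_zero.mp (abs_eq_zero.mp h)
    | (i + 2), 1, _, _ =>
      rw [msmD] at h
      have h1 := msmD_nonneg c hc' x y (i + 1) 1
      have h2 := msmC_ge c (x (i + 2)) (x (i + 1)) (y 1)
      linarith
    | 1, (j + 2), _, _ =>
      rw [msmD] at h
      have h1 := msmD_nonneg c hc' x y 1 (j + 1)
      have h2 := msmC_ge c (y (j + 2)) (x 1) (y (j + 1))
      linarith
    | (i + 2), (j + 2), _, _ =>
      rw [msmD] at h
      have h1 := msmD_nonneg c hc' x y (i + 1) (j + 1)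
      have h2 := msmD_nonneg c hc' x y (i + 1) (j + 2)
      have h3 := msmD_nonneg c hc' x y (i + 2) (j + 1)
      have c1 := msmC_ge c (x (i + 2)) (x (i + 1)) (y (j + 2))
      have c2 := msmC_ge c (y (j + 2)) (x (i + 2)) (y (j + 1))
      have a := abs_nonneg (x (i + 2) - y (j + 2))
      have hA : msmD c x y (i + 1) (j + 1) + |x (i + 2) - y (j + 2)| = 0 := by
        by_contra hne
        have hA' : 0 < msmD c x y (i + 1) (j + 1) + |x (i + 2) - y (j + 2)| :=
          lt_of_le_of_ne (by linarith) (Ne.symm hne)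
        have hB : 0 < msmD c x y (i + 1) (j + 2) + msmC c (x (i + 2)) (x (i + 1)) (y (j + 2)) := by
          linarith
        have hC : 0 < msmD c x y (i + 2) (j + 1) + msmC c (y (j + 2)) (x (i + 2)) (y (j + 1)) := by
          linarith
        have := lt_min hA' (lt_min hB hC)
        linarith
      have hD : msmD c x y (i + 1) (j + 1) = 0 := by linarith
      have hab : |x (i + 2) - y (j + 2)| = 0 := by linarith
      have hxy := sub_eq_zero.mp (abs_eq_zero.mp hab)
      obtain ⟨heq, hall⟩ := ih (i + 1) (by omega) (j + 1) (by omega) (by omega) hD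
      have hij : i = j := by omega
      subst hij
      refine ⟨by omega, fun k hk1 hk2 => ?_⟩
      rcases Nat.lt_or_ge k (i + 2) with hk | hk
      · exact hall k hk1 (by omega)
      · have : k = i + 2 := by omega
        rw [this]; exact hxy

/-- Nonnegativity and identity of indiscernibles of the MSM distance:
`d(x,y) ≥ 0`, `d(x,x) = 0`, and if `c > 0` then `d(x,y) = 0` iff the two
time series coincide. -/
theorem msm_nonneg_eq_zero_iff (c : ℝ) (hc : 0 ≤ c) (x y : ℕ → ℝ) (m n : ℕ)
    (hm : 1 ≤ m) (hn : 1 ≤ n) :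
    0 ≤ msmD c x y m n ∧
    msmD c x x m m = 0 ∧
    (0 < c → (msmD c x y m n = 0 ↔ m = n ∧ ∀ i, 1 ≤ i → i ≤ m → x i = y i)) := by
  refine ⟨msmD_nonneg c hc x y m n,
    msmD_diag_eq_zero c hc x x m hm (fun _ _ _ => rfl), fun hc' => ?_⟩
  constructor
  · exact msmD_eq_zero_forced c hc' x y m n hm hn
  · rintro ⟨rfl, hall⟩
    exact msmD_diag_eq_zero c hc x y m hm hall
end
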